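/- (Vertex-link claim from the proof of the 1-cycle lemma.) Let d ≥ 1, let b ∈ ℕA_d with deg b = k ≥ 4, and let ε ∈ {1,…,⌊k/2⌋}. Let a ∈ A_d, and let (α,χ) ∈ A_{d+1} (so α ∈ A_d, χ ∈ {0,1}) with (α,χ) ≠ (a,1). If the closed segment joining e_{(α,χ)} and e_{(a,1)} is contained in |Δ_{(b,ε)}|, then b − a ∈ ℕA_d and e_{(α,χ)} ∈ |R_{b−a,ε}|. -/

import Mathlib

open CategoryTheory

noncomputable section

/-- The set `A_d ⊆ ℤ^{1+d}` of vectors whose first coordinate is `1` and whose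
remaining coordinates are `0` or `1`. -/
def Avec (d : ℕ) : Set (Fin (d + 1) → ℤ) :=
  {v | v 0 = 1 ∧ ∀ i, i ≠ 0 → v i = 0 ∨ v i = 1}

/-- `ℕA_d`, the additive submonoid of `ℤ^{1+d}` generated by `A_d`. -/
def NA (d : ℕ) : AddSubmonoid (Fin (d + 1) → ℤ) :=
  AddSubmonoid.closure (Avec d)

/-- `ℝ^{A_d}`. -/
abbrev RA (d : ℕ) : Type := ↥(Avec d) → ℝ

/-- The standard basis vector of `ℝ^{A_d}` indexed by `a ∈ A_d`. -/
def eVec {d : ℕ} (a : ↥(Avec d)) : RA d :=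
  fun x => if x = a then 1 else 0

/-- The geometric realization `|Δ_b| ⊆ ℝ^{A_d}`: the union over all tuples
`(a_1, …, a_k)` of elements of `A_d` with `a_1 + ⋯ + a_k = b` of the convex hulls
`conv {e_{a_1}, …, e_{a_k}}`.  (Any such tuple automatically has length `k = deg b`.) -/
def Delta (d : ℕ) (b : Fin (d + 1) → ℤ) : Set (RA d) :=
  ⋃ (k : ℕ) (f : Fin k → ↥(Avec d)) (_ : ∑ i, (f i : Fin (d + 1) → ℤ) = b),
    convexHull ℝ (Set.range fun i => eVec (f i))

lemma snoc_mem_Avec {d : ℕ} {a : Fin (d + 1) → ℤ} (ha : a ∈ Avec d) {χ : ℤ}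
    (hχ : χ = 0 ∨ χ = 1) : Fin.snoc a χ ∈ Avec (d + 1) := by
  constructor
  · have h0 : (0 : Fin (d + 2)) = Fin.castSucc 0 := rfl
    rw [h0, Fin.snoc_castSucc]
    exact ha.1
  · intro i hi
    induction i using Fin.lastCases with
    | last => rw [Fin.snoc_last]; exact hχ
    | cast j =>
      rw [Fin.snoc_castSucc]
      rcases eq_or_ne j 0 with hj | hj
      · exact absurd (by simp [hj]) hi
      · exact ha.2 j hj

/-- Appending a last coordinate `0` to an element of `A_d`. -/
def app0 {d : ℕ} (a : ↥(Avec d)) : ↥(Avec (d + 1)) :=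
  ⟨Fin.snoc ↑a 0, snoc_mem_Avec a.2 (Or.inl rfl)⟩

/-- Appending a last coordinate `1` to an element of `A_d`. -/
def app1 {d : ℕ} (a : ↥(Avec d)) : ↥(Avec (d + 1)) :=
  ⟨Fin.snoc ↑a 1, snoc_mem_Avec a.2 (Or.inr rfl)⟩

/-- The realization `|R_{c,ε}| ⊆ ℝ^{A_{d+1}}`: the union over tuples
`(α_1, …, α_s)` of elements of `A_d` with `α_1 + ⋯ + α_s = c` and over sequences of
pairwise distinct indices `i_1, …, i_{s-1}` of the convex hulls of
`e_{(α_{i_1},1)}, …, e_{(α_{i_{ε-1}},1)}, e_{(α_{i_ε},0)}, …, e_{(α_{i_{s-1}},0)}`. -/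
def Rset (d : ℕ) (c : Fin (d + 1) → ℤ) (ε : ℕ) : Set (RA (d + 1)) :=
  ⋃ (s : ℕ) (α : Fin s → ↥(Avec d)) (_ : ∑ i, (α i : Fin (d + 1) → ℤ) = c)
    (g : Fin (s - 1) → Fin s) (_ : Function.Injective g),
    convexHull ℝ (Set.range fun j : Fin (s - 1) =>
      eVec (if (j : ℕ) < ε - 1 then app1 (α (g j)) else app0 (α (g j))))

/-- The realization `|F^l(Δ_b)| ⊆ ℝ^{A_{d+1}}`: the union over tuples
`(a_1, …, a_k)` of elements of `A_d` with `a_1 + ⋯ + a_k = b` and over indices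
`i_0, …, i_l ∈ {1, …, k}` of the convex hulls of `e_{(a_{i_0},0)}, …, e_{(a_{i_l},0)}`. -/
def Fset (d : ℕ) (b : Fin (d + 1) → ℤ) (l : ℕ) : Set (RA (d + 1)) :=
  ⋃ (k : ℕ) (a : Fin k → ↥(Avec d)) (_ : ∑ i, (a i : Fin (d + 1) → ℤ) = b)
    (idx : Fin (l + 1) → Fin k),
    convexHull ℝ (Set.range fun j => eVec (app0 (a (idx j))))

/-- The set `|S'_ε| ⊆ ℝ^{A_{d+1}}` associated to `S = ⟨a_1, …, a_k⟩`: the union over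
all `(χ_1, …, χ_k) ∈ {0,1}^k` with exactly `ε` entries equal to `1` of the convex hulls
`conv {e_{(a_1,χ_1)}, …, e_{(a_k,χ_k)}}`. -/
def Sprime {d k : ℕ} (a : Fin k → ↥(Avec d)) (ε : ℕ) : Set (RA (d + 1)) :=
  ⋃ (χ : Fin k → Bool) (_ : (Finset.univ.filter fun i => χ i = true).card = ε),
    convexHull ℝ (Set.range fun i => eVec (if χ i then app1 (a i) else app0 (a i)))

/-- The singular chain complex of a topological space with `ℂ` coefficients. -/
def singularChains : TopCat.{0} ⥤ ChainComplex (ModuleCat.{0} ℂ) ℕ :=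
  TopCat.toSSet ⋙ ((SimplicialObject.whiskering _ _).obj (ModuleCat.free ℂ)) ⋙
    AlgebraicTopology.alternatingFaceMapComplex (ModuleCat.{0} ℂ)

/-- Singular homology with `ℂ` coefficients, as a functor. -/
def SH (n : ℕ) : TopCat.{0} ⥤ ModuleCat.{0} ℂ :=
  singularChains ⋙ HomologicalComplex.homologyFunctor (ModuleCat.{0} ℂ) (ComplexShape.down ℕ) n

end

/-! The midpoint of the segment lies in one simplex `conv {e_{w_1}, …, e_{w_k}}` of
`|Δ_{(b,ε)}|`, and both `(a,1)` and `v` must occur among the `w_i`, at distinct positions.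
Deleting `(a,1)` and forgetting last coordinates leaves a tuple summing to `b - a`, and `v`
becomes a vertex of `|R_{b-a,ε}|` once an injective index sequence `i_1, …, i_{k-2}` puts it
in position `ε ≤ k/2 ≤ k - 2` (last coordinate `0`) or in position `1` (last coordinate `1`,
which forces `ε ≥ 2`, since `(a,1)` already contributes `1` to the last coordinate `ε` of
the sum). -/

lemma init_mem_Avec {d : ℕ} {w : Fin (d + 2) → ℤ} (hw : w ∈ Avec (d + 1)) :
    Fin.init w ∈ Avec d :=
  ⟨hw.1, fun i hi => hw.2 (Fin.castSucc i) (Fin.castSucc_ne_zero_iff.mpr hi)⟩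

def dropLast {d : ℕ} (w : ↥(Avec (d + 1))) : ↥(Avec d) :=
  ⟨(Fin.init (w : Fin (d + 2) → ℤ) : Fin (d + 1) → ℤ), init_mem_Avec w.2⟩

lemma dropLast_app1 {d : ℕ} (a : ↥(Avec d)) : dropLast (app1 a) = a :=
  Subtype.ext (Fin.init_snoc (α := fun _ => ℤ) _ _)

lemma app1_apply_last {d : ℕ} (a : ↥(Avec d)) :
    (app1 a : Fin (d + 2) → ℤ) (Fin.last (d + 1)) = 1 :=
  Fin.snoc_last (α := fun _ => ℤ) _ _

lemma last_eq_zero_or_one {d : ℕ} (w : ↥(Avec (d + 1))) :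
    (w : Fin (d + 2) → ℤ) (Fin.last (d + 1)) = 0 ∨ (w : Fin (d + 2) → ℤ) (Fin.last (d + 1)) = 1 :=
  w.2.2 _ (Fin.last_pos.ne')

lemma app0_dropLast {d : ℕ} {w : ↥(Avec (d + 1))}
    (hw : (w : Fin (d + 2) → ℤ) (Fin.last (d + 1)) = 0) : app0 (dropLast w) = w :=
  Subtype.ext <| (congrArg (Fin.snoc (Fin.init (w : Fin (d + 2) → ℤ))) hw.symm).trans
    (Fin.snoc_init_self _)

lemma app1_dropLast {d : ℕ} {w : ↥(Avec (d + 1))}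
    (hw : (w : Fin (d + 2) → ℤ) (Fin.last (d + 1)) = 1) : app1 (dropLast w) = w :=
  Subtype.ext <| (congrArg (Fin.snoc (Fin.init (w : Fin (d + 2) → ℤ))) hw.symm).trans
    (Fin.snoc_init_self _)

lemma sum_dropLast {d : ℕ} {ι : Type*} [Fintype ι] (f : ι → ↥(Avec (d + 1))) :
    ∑ i, (dropLast (f i) : Fin (d + 1) → ℤ) = Fin.init (∑ i, (f i : Fin (d + 2) → ℤ)) := by
  ext j
  simp [dropLast, Fin.init, Finset.sum_apply]

lemma sum_apply_zero_eq_card {d : ℕ} {ι : Type*} [Fintype ι] (f : ι → ↥(Avec d)) :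
    (∑ i, (f i : Fin (d + 1) → ℤ)) 0 = Fintype.card ι := by
  simp [Finset.sum_apply, fun i => (f i).2.1]

lemma two_le_sum_apply_last {d : ℕ} {ι : Type*} [Fintype ι] {f : ι → ↥(Avec (d + 1))}
    {i j : ι} (hij : i ≠ j) (hi : (f i : Fin (d + 2) → ℤ) (Fin.last (d + 1)) = 1)
    (hj : (f j : Fin (d + 2) → ℤ) (Fin.last (d + 1)) = 1) :
    2 ≤ (∑ l, (f l : Fin (d + 2) → ℤ)) (Fin.last (d + 1)) := by
  classical
  have hnonneg l : 0 ≤ (f l : Fin (d + 2) → ℤ) (Fin.last (d + 1)) := by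
    rcases last_eq_zero_or_one (f l) with h | h <;> simp [h]
  calc (2 : ℤ) = ∑ l ∈ {i, j}, (f l : Fin (d + 2) → ℤ) (Fin.last (d + 1)) := by
        rw [Finset.sum_pair hij, hi, hj]; norm_num
    _ ≤ _ := by rw [Finset.sum_apply]; exact Finset.sum_le_univ_sum_of_nonneg hnonneg

lemma sum_mem_NA {d : ℕ} {ι : Type*} [Fintype ι] (f : ι → ↥(Avec d)) :
    ∑ i, (f i : Fin (d + 1) → ℤ) ∈ NA d :=
  AddSubmonoid.sum_mem _ fun i _ => AddSubmonoid.subset_closure (f i).2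

lemma exists_eq_of_mem_convexHull_eVec {d : ℕ} {ι : Type*} {f : ι → ↥(Avec d)} {x : RA d}
    (hx : x ∈ convexHull ℝ (Set.range fun i => eVec (f i))) {c : ↥(Avec d)} (hc : x c ≠ 0) :
    ∃ i, f i = c := by
  by_contra! h
  refine hc (convexHull_min ?_ (convex_hyperplane (f := fun y : RA d => y c) ?_ 0) hx)
  · rintro _ ⟨i, rfl⟩
    exact if_neg fun hi => h i hi.symm
  · exact ⟨fun _ _ => rfl, fun _ _ => rfl⟩

lemma midpoint_eVec_apply_left_pos {d : ℕ} (v w : ↥(Avec d)) :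
    0 < midpoint ℝ (eVec v) (eVec w) v := by
  have hw : 0 ≤ eVec w v := by unfold eVec; split_ifs <;> norm_num
  have hv : eVec v v = 1 := if_pos rfl
  simp only [midpoint_eq_smul_add, Pi.smul_apply, Pi.add_apply, smul_eq_mul, hv, invOf_eq_inv]
  positivity

lemma midpoint_eVec_apply_right_pos {d : ℕ} (v w : ↥(Avec d)) :
    0 < midpoint ℝ (eVec v) (eVec w) w :=
  midpoint_comm (R := ℝ) (eVec w) (eVec v) ▸ midpoint_eVec_apply_left_pos w v

lemma eVec_mem_Rset {d s : ℕ} {c : Fin (d + 1) → ℤ} (ε : ℕ) {α : Fin s → ↥(Avec d)}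
    (hα : ∑ i, (α i : Fin (d + 1) → ℤ) = c) (j : Fin s) (p : Fin (s - 1)) :
    eVec (if (p : ℕ) < ε - 1 then app1 (α j) else app0 (α j)) ∈ Rset d c ε := by
  set g : Fin (s - 1) → Fin s := fun q =>
    Equiv.swap j (Fin.castLE (Nat.sub_le s 1) p) (Fin.castLE (Nat.sub_le s 1) q)
  have hg : Function.Injective g := (Equiv.injective _).comp (Fin.castLE_injective _)
  simp only [Rset, Set.mem_iUnion]
  exact ⟨s, α, hα, g, hg, subset_convexHull ℝ _ ⟨p, by simp [g]⟩⟩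

theorem vertex_link_in_Rset_general (d : ℕ) (b : Fin (d + 1) → ℤ)
    (k : ℕ) (hk : b 0 = (k : ℤ)) (hk4 : 4 ≤ k) (ε : ℕ) (hε2 : ε ≤ k / 2)
    (a : ↥(Avec d)) (v : ↥(Avec (d + 1))) (hv : v ≠ app1 a)
    (hseg : segment ℝ (eVec v) (eVec (app1 a)) ⊆ Delta (d + 1) (Fin.snoc b (ε : ℤ))) :
    (b - ↑a) ∈ NA d ∧ eVec v ∈ Rset d (b - ↑a) ε := by
  have hmid := hseg (midpoint_mem_segment _ _)
  simp only [Delta, Set.mem_iUnion] at hmid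
  obtain ⟨n, f, hf, hmid⟩ := hmid
  obtain ⟨i0, hi0⟩ := exists_eq_of_mem_convexHull_eVec hmid (midpoint_eVec_apply_right_pos _ _).ne'
  obtain ⟨i, rfl⟩ := exists_eq_of_mem_convexHull_eVec hmid (midpoint_eVec_apply_left_pos _ _).ne'
  have hi : i ≠ i0 := fun h => hv (h ▸ hi0)
  have hn : (n : ℤ) = k := by
    have := sum_apply_zero_eq_card f
    rw [hf] at this
    simpa [← hk] using this.symm
  obtain ⟨m, rfl⟩ : ∃ m, n = m + 1 := ⟨n - 1, by omega⟩
  obtain ⟨j, rfl⟩ := Fin.exists_succAbove_eq hi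
  set α : Fin m → ↥(Avec d) := fun j => dropLast (f (i0.succAbove j))
  have hα : ∑ j, (α j : Fin (d + 1) → ℤ) = b - a := by
    have := sum_dropLast f
    rw [Fin.sum_univ_succAbove _ i0, hi0, dropLast_app1, hf, Fin.init_snoc] at this
    exact eq_sub_of_add_eq' this
  refine ⟨hα ▸ sum_mem_NA α, ?_⟩
  rcases last_eq_zero_or_one (f (i0.succAbove j)) with hlast | hlast
  · have := eVec_mem_Rset ε hα j ⟨ε - 1, by omega⟩
    rwa [if_neg (lt_irrefl _), app0_dropLast hlast] at this
  · have hε : (2 : ℤ) ≤ ε := by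
      have := two_le_sum_apply_last hi hlast (hi0 ▸ app1_apply_last a)
      rwa [hf, Fin.snoc_last] at this
    have := eVec_mem_Rset ε hα j ⟨0, by omega⟩
    rwa [if_pos (show 0 < ε - 1 by omega), app1_dropLast hlast] at this

/-- Vertex-link claim from the proof of the `1`-cycle lemma: if `deg b = k ≥ 4`,
`1 ≤ ε ≤ ⌊k/2⌋`, `v ∈ A_{d+1}` with `v ≠ (a,1)`, and the segment joining `e_v` and
`e_{(a,1)}` lies in `|Δ_{(b,ε)}|`, then `b - a ∈ ℕA_d` and `e_v ∈ |R_{b-a,ε}|`. -/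
theorem vertex_link_in_Rset (d : ℕ) (hd : 1 ≤ d) (b : Fin (d + 1) → ℤ) (hb : b ∈ NA d)
    (k : ℕ) (hk : b 0 = (k : ℤ)) (hk4 : 4 ≤ k) (ε : ℕ) (hε1 : 1 ≤ ε) (hε2 : ε ≤ k / 2)
    (a : ↥(Avec d)) (v : ↥(Avec (d + 1))) (hv : v ≠ app1 a)
    (hseg : segment ℝ (eVec v) (eVec (app1 a)) ⊆ Delta (d + 1) (Fin.snoc b (ε : ℤ))) :
    (b - ↑a) ∈ NA d ∧ eVec v ∈ Rset d (b - ↑a) ε :=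
  vertex_link_in_Rset_general d b k hk hk4 ε hε2 a v hv hseg
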